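/- Let T be a tree with at least 5 vertices, and let T' be the subtree of T obtained by deleting all leaves of T. If T' has at least 3 leaves, then tr(T) = tr(T') + 6. -/

import Mathlib

/-- The triameter of a graph `G`: the maximum of `d(a,b) + d(a,c) + d(b,c)`
over all triples of vertices `a, b, c`. -/
noncomputable def SimpleGraph.triameter {V : Type*} [Fintype V] (G : SimpleGraph V) : ℕ :=
  Finset.univ.sup fun p : V × V × V =>
    G.dist p.1 p.2.1 + G.dist p.1 p.2.2 + G.dist p.2.1 p.2.2

instance {V W : Type*} (f : V → W) (G : SimpleGraph W) [DecidableRel G.Adj] :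
    DecidableRel (G.comap f).Adj :=
  fun a b => inferInstanceAs (Decidable (G.Adj (f a) (f b)))

/-!
Every vertex of a tree with at least three vertices is a non-leaf or adjacent to one, and a
geodesic never passes through a leaf, so `T'` is a tree whose distances are those of `T`.
Projecting a triple of `T` onto `T'` therefore shortens each pairwise distance by at most `2`,
whence `tr(T) ≤ tr(T') + 6`. Conversely, in a tree a non-leaf off the geodesic between `b` and
`c` has a neighbour farther from both, so the triameter of `T'` is attained at three distinct
leaves of `T'`; each of them carries a leaf of `T`, and passing to these leaves adds exactly `2`
to every pairwise distance.
-/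

open Finset

namespace SimpleGraph

variable {V W : Type*} {G : SimpleGraph V} {u v w x : V}

section Triameter

variable [Fintype V]

theorem dist_add_dist_add_dist_le_triameter (G : SimpleGraph V) (a b c : V) :
    G.dist a b + G.dist a c + G.dist b c ≤ G.triameter :=
  le_sup (f := fun p : V × V × V => G.dist p.1 p.2.1 + G.dist p.1 p.2.2 + G.dist p.2.1 p.2.2)
    (mem_univ (a, b, c))

theorem exists_dist_add_dist_add_dist_eq_triameter [Nonempty V] (G : SimpleGraph V) :
    ∃ a b c, G.dist a b + G.dist a c + G.dist b c = G.triameter := by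
  obtain ⟨⟨a, b, c⟩, -, h⟩ := exists_mem_eq_sup univ univ_nonempty
    fun p : V × V × V => G.dist p.1 p.2.1 + G.dist p.1 p.2.2 + G.dist p.2.1 p.2.2
  exact ⟨a, b, c, h.symm⟩

theorem triameter_le_triameter_add_six_of_dist_le [Fintype W] {H : SimpleGraph W} (f : V → W)
    (hf : ∀ x y, G.dist x y ≤ H.dist (f x) (f y) + 2) : G.triameter ≤ H.triameter + 6 :=
  Finset.sup_le fun ⟨a, b, c⟩ _ => by
    have := H.dist_add_dist_add_dist_le_triameter (f a) (f b) (f c)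
    have := hf a b; have := hf a c; have := hf b c
    dsimp only
    omega

end Triameter

theorem IsTree.length_eq_dist_of_isPath (hG : G.IsTree) {p : G.Walk u v} (hp : p.IsPath) :
    p.length = G.dist u v := by
  obtain ⟨q, hq, hlen⟩ := hG.connected.exists_path_of_dist u v
  rw [(hG.existsUnique_path u v).unique hp hq, hlen]

theorem IsTree.dist_eq_dist_add_one_of_ne_snd (hG : G.IsTree) {p : G.Walk u v} (hp : p.IsPath)
    (hx : G.Adj u x) (hne : x ≠ p.snd) : G.dist x v = G.dist u v + 1 := by
  have hxp : x ∉ p.support := fun h => hne (hG.isAcyclic.eq_snd_of_adj_start hp hx h)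
  rw [← hG.length_eq_dist_of_isPath hp, ← hG.length_eq_dist_of_isPath (hp.cons (h := hx.symm) hxp),
    Walk.length_cons]

/-- In a tree, geodesics from `a` leaving through different neighbours only meet at `a`. -/
theorem IsTree.dist_eq_dist_add_dist_of_snd_ne (hG : G.IsTree) {a b c : V} {p : G.Walk a b}
    {q : G.Walk a c} (hp : p.IsPath) (hq : q.IsPath) (hne : p.snd ≠ q.snd) :
    G.dist b c = G.dist a b + G.dist a c := by
  classical
  have hmeet : ∀ y ∈ p.support, y ∈ q.support → y = a := by
    intro y hyp hyq
    by_contra hya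
    refine hne ?_
    rw [← Walk.snd_takeUntil hya p hyp, ← Walk.snd_takeUntil hya q hyq,
      (hG.existsUnique_path a y).unique (hp.takeUntil hyp) (hq.takeUntil hyq)]
  have hpath : (p.reverse.append q).IsPath := by
    have hqnd := hq.support_nodup
    rw [← q.cons_tail_support, List.nodup_cons] at hqnd
    rw [Walk.isPath_def, Walk.support_append, Walk.support_reverse]
    refine List.Nodup.append (List.nodup_reverse.2 hp.support_nodup) hqnd.2 fun y hyp hyq => ?_
    have hya := hmeet y (List.mem_reverse.1 hyp) (List.mem_of_mem_tail hyq)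
    exact hqnd.1 (hya ▸ hyq)
  rw [← hG.length_eq_dist_of_isPath hpath, Walk.length_append, Walk.length_reverse,
    hG.length_eq_dist_of_isPath hp, hG.length_eq_dist_of_isPath hq]

section Finite

variable [Fintype V] [DecidableRel G.Adj]

theorem IsTree.exists_adj_dist_eq_dist_add_one (hG : G.IsTree) {a b c : V} (ha : 1 < G.degree a)
    (habc : G.dist b c < G.dist a b + G.dist a c) :
    ∃ x, G.Adj a x ∧ G.dist x b = G.dist a b + 1 ∧ G.dist x c = G.dist a c + 1 := by
  obtain ⟨p, hp, -⟩ := hG.connected.exists_path_of_dist a b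
  obtain ⟨q, hq, -⟩ := hG.connected.exists_path_of_dist a c
  have hsnd : p.snd = q.snd := by
    by_contra hne
    have := hG.dist_eq_dist_add_dist_of_snd_ne hp hq hne
    omega
  obtain ⟨x, hx, hxp⟩ := exists_mem_ne (G.card_neighborFinset_eq_degree a ▸ ha) p.snd
  rw [mem_neighborFinset] at hx
  exact ⟨x, hx, hG.dist_eq_dist_add_one_of_ne_snd hp hx hxp,
    hG.dist_eq_dist_add_one_of_ne_snd hq hx (hsnd ▸ hxp)⟩

/-- The maximiser of `d(·, b) + d(·, c)` is a leaf unless it lies on the geodesic from `b` to `c`,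
where every vertex, in particular a leaf other than `b` and `c`, is at least as good. -/
theorem IsTree.exists_degree_eq_one_forall_dist_add_dist_le (hG : G.IsTree)
    (h3 : 3 ≤ #{v | G.degree v = 1}) (b c : V) :
    ∃ l, G.degree l = 1 ∧ l ≠ b ∧ l ≠ c ∧
      ∀ x, G.dist x b + G.dist x c ≤ G.dist l b + G.dist l c := by
  classical
  obtain ⟨l₀, hl₀, hl₀bc⟩ := exists_mem_notMem_of_card_lt_card
    (s := {b, c}) (t := {v | G.degree v = 1}) ((card_le_two).trans_lt (by omega))
  rw [mem_filter] at hl₀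
  simp only [mem_insert, mem_singleton, not_or] at hl₀bc
  have : Nonempty V := ⟨b⟩
  obtain ⟨a, ha⟩ := Finite.exists_max fun x => G.dist x b + G.dist x c
  by_cases hgeo : G.dist a b + G.dist a c ≤ G.dist b c
  · refine ⟨l₀, hl₀.2, hl₀bc.1, hl₀bc.2, fun x => (ha x).trans (hgeo.trans ?_)⟩
    simpa only [dist_comm (u := b)] using hG.connected.dist_triangle (u := b) (v := l₀) (w := c)
  · have hab : a ≠ b := by rintro rfl; simp at hgeo
    have hac : a ≠ c := by rintro rfl; simp [dist_comm] at hgeo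
    refine ⟨a, ?_, hab, hac, ha⟩
    have : Nontrivial V := ⟨⟨a, b, hab⟩⟩
    have hpos := hG.connected.preconnected.degree_pos_of_nontrivial a
    by_contra hne
    obtain ⟨x, -, hxb, hxc⟩ := hG.exists_adj_dist_eq_dist_add_one (by omega) (not_le.1 hgeo)
    have := ha x
    omega

theorem IsTree.exists_degree_eq_one_dist_add_dist_add_dist_eq_triameter (hG : G.IsTree)
    (h3 : 3 ≤ #{v | G.degree v = 1}) :
    ∃ a b c, G.degree a = 1 ∧ G.degree b = 1 ∧ G.degree c = 1 ∧ a ≠ b ∧ a ≠ c ∧ b ≠ c ∧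
      G.dist a b + G.dist a c + G.dist b c = G.triameter := by
  have : Nonempty V := hG.connected.nonempty
  obtain ⟨a, b, c, habc⟩ := G.exists_dist_add_dist_add_dist_eq_triameter
  obtain ⟨la, hla, -, -, hmaxa⟩ := hG.exists_degree_eq_one_forall_dist_add_dist_le h3 b c
  obtain ⟨lb, hlb, hlba, -, hmaxb⟩ := hG.exists_degree_eq_one_forall_dist_add_dist_le h3 la c
  obtain ⟨lc, hlc, hlca, hlcb, hmaxc⟩ := hG.exists_degree_eq_one_forall_dist_add_dist_le h3 la lb
  refine ⟨la, lb, lc, hla, hlb, hlc, hlba.symm, hlca.symm, hlcb.symm,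
    le_antisymm (G.dist_add_dist_add_dist_le_triameter _ _ _) ?_⟩
  have h₁ := hmaxa a
  have h₂ := hmaxb b
  have h₃ := hmaxc c
  simp only [dist_comm (u := b) (v := la), dist_comm (u := lb) (v := la)] at h₂
  simp only [dist_comm (u := c), dist_comm (u := lc)] at h₃
  omega

end Finite

section Leaves

theorem neighborSet_subsingleton_of_degree_eq_one [Fintype (G.neighborSet v)]
    (hv : G.degree v = 1) : (G.neighborSet v).Subsingleton := by
  obtain ⟨w, -, hw⟩ := degree_eq_one_iff_existsUnique_adj.1 hv
  exact fun x hx y hy => (hw x hx).trans (hw y hy).symm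

variable [Fintype V] [DecidableRel G.Adj]

theorem Preconnected.degree_ne_one_of_adj_of_degree_eq_one (hG : G.Preconnected)
    (hV : 2 < Fintype.card V) (huv : G.Adj u v) (hu : G.degree u = 1) : G.degree v ≠ 1 := by
  classical
  intro hv
  obtain ⟨w, -, hw⟩ := exists_mem_notMem_of_card_lt_card (s := {u, v}) (t := univ)
    ((card_le_two).trans_lt (by rwa [card_univ]))
  simp only [mem_insert, mem_singleton, not_or] at hw
  obtain ⟨p, hp⟩ := hG.exists_isPath u w
  have hnil : ¬p.Nil := Walk.not_nil_of_ne (Ne.symm hw.1)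
  have hsnd : p.snd = v :=
    neighborSet_subsingleton_of_degree_eq_one hu (p.adj_snd hnil) huv
  refine hp.isTrail.not_mem_support_of_subsingleton_neighborSet huv.ne' (Ne.symm hw.2)
    (neighborSet_subsingleton_of_degree_eq_one hv) ?_
  exact hsnd ▸ p.getVert_mem_support 1

theorem Connected.dist_eq_dist_add_one_of_degree_eq_one (hG : G.Connected) (hl : G.degree u = 1)
    (hn : G.Adj u v) (hw : w ≠ u) : G.dist u w = G.dist v w + 1 := by
  obtain ⟨p, hp⟩ := hG.exists_walk_length_eq_dist u w
  have hnil : ¬p.Nil := Walk.not_nil_of_ne hw.symm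
  have hsnd : p.snd = v := neighborSet_subsingleton_of_degree_eq_one hl (p.adj_snd hnil) hn
  have hle : G.dist v w + 1 ≤ G.dist u w := by
    rw [← hp, ← p.length_tail_add_one hnil, Nat.add_le_add_iff_right]
    exact hsnd ▸ dist_le p.tail
  have hge := hG.dist_triangle (u := u) (v := v) (w := w)
  rw [dist_eq_one_iff_adj.2 hn] at hge
  omega

theorem Connected.dist_eq_dist_add_two_of_degree_eq_one (hG : G.Connected) {u' v' : V}
    (hu : G.degree u = 1) (hv : G.degree v = 1) (huu' : G.Adj u u') (hvv' : G.Adj v v')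
    (huv : u ≠ v) (hu'v : u' ≠ v) : G.dist u v = G.dist u' v' + 2 := by
  rw [hG.dist_eq_dist_add_one_of_degree_eq_one hu huu' huv.symm, dist_comm,
    hG.dist_eq_dist_add_one_of_degree_eq_one hv hvv' hu'v, dist_comm]

end Leaves

theorem Preconnected.dist_induce_eq (hG : G.Preconnected) {s : Set V}
    (hs : ∀ v ∉ s, (G.neighborSet v).Subsingleton) (u v : s) :
    (G.induce s).dist u v = G.dist u v := by
  obtain ⟨p, hp, hlen⟩ := (hG u v).exists_path_of_dist
  have hps : ∀ x ∈ p.support, x ∈ s := fun x hx => by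
    by_contra hxs
    exact hp.isTrail.not_mem_support_of_subsingleton_neighborSet (by rintro rfl; exact hxs u.2)
      (by rintro rfl; exact hxs v.2) (hs x hxs) hx
  have hlift : (p.induce s hps).length = p.length := by
    rw [← Walk.length_map (Embedding.induce s).toHom, Walk.map_induce]
    rfl
  obtain ⟨r, hr⟩ := Reachable.exists_walk_length_eq_dist ⟨p.induce s hps⟩
  refine le_antisymm (hlen ▸ hlift ▸ dist_le _) ?_
  calc G.dist u v ≤ (r.map (Embedding.induce s).toHom).length := dist_le _
    _ = (G.induce s).dist u v := by rw [Walk.length_map, hr]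

section DeleteLeaves

variable [Fintype V] [DecidableRel G.Adj]

variable (G) in
abbrev deleteLeaves : SimpleGraph {v // G.degree v ≠ 1} :=
  G.comap Subtype.val

theorem Preconnected.dist_deleteLeaves (hG : G.Preconnected) (u v : {v // G.degree v ≠ 1}) :
    G.deleteLeaves.dist u v = G.dist u v :=
  hG.dist_induce_eq (s := {v | G.degree v ≠ 1})
    (fun _ hv => neighborSet_subsingleton_of_degree_eq_one (not_not.1 hv)) u v

theorem IsTree.deleteLeaves (hG : G.IsTree) [Nonempty {v // G.degree v ≠ 1}] :
    G.deleteLeaves.IsTree :=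
  ⟨⟨hG.connected.preconnected.induce_of_degree_eq_one (s := {v | G.degree v ≠ 1})
    fun _ hv => neighborSet_subsingleton_of_degree_eq_one (not_not.1 hv)⟩,
    hG.isAcyclic.comap (Embedding.induce _).toHom Subtype.val_injective⟩

theorem exists_adj_degree_eq_one_of_degree_deleteLeaves_eq_one {v : {v // G.degree v ≠ 1}}
    (hv : G.deleteLeaves.degree v = 1) : ∃ l, G.Adj v l ∧ G.degree l = 1 := by
  by_contra! h
  have hdeg : G.deleteLeaves.degree v = G.degree v :=
    degree_induce_of_neighborSet_subset (s := {v | G.degree v ≠ 1}) fun l hl => h l hl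
  exact v.2 (hdeg ▸ hv)

theorem Connected.dist_eq_dist_deleteLeaves_add_two (hG : G.Connected)
    {a b : {v // G.degree v ≠ 1}} {la lb : V} (hab : a ≠ b) (hala : G.Adj a la)
    (hla : G.degree la = 1) (hblb : G.Adj b lb) (hlb : G.degree lb = 1) :
    G.dist la lb = G.deleteLeaves.dist a b + 2 := by
  have hlalb : la ≠ lb := by
    rintro rfl
    exact hab (Subtype.ext (neighborSet_subsingleton_of_degree_eq_one hla hala.symm hblb.symm))
  rw [hG.dist_eq_dist_add_two_of_degree_eq_one hla hlb hala.symm hblb.symm hlalb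
    fun h => a.2 (h ▸ hlb), hG.preconnected.dist_deleteLeaves]

theorem Connected.triameter_le_triameter_deleteLeaves_add_six (hG : G.Connected)
    (hV : 2 < Fintype.card V) : G.triameter ≤ G.deleteLeaves.triameter + 6 := by
  have hnear : ∀ x, ∃ y : {v // G.degree v ≠ 1}, G.dist x y ≤ 1 := by
    intro x
    by_cases hx : G.degree x = 1
    · obtain ⟨y, hxy, -⟩ := degree_eq_one_iff_existsUnique_adj.1 hx
      exact ⟨⟨y, hG.preconnected.degree_ne_one_of_adj_of_degree_eq_one hV hxy hx⟩,
        (dist_eq_one_iff_adj.2 hxy).le⟩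
    · exact ⟨⟨x, hx⟩, by simp⟩
  choose r hr using hnear
  refine triameter_le_triameter_add_six_of_dist_le r fun x y => ?_
  have hx := hr x
  have hy := hr y
  rw [dist_comm] at hy
  have h₁ := hG.dist_triangle (u := x) (v := r x) (w := y)
  have h₂ := hG.dist_triangle (u := (r x : V)) (v := r y) (w := y)
  rw [hG.preconnected.dist_deleteLeaves]
  omega

theorem IsTree.triameter_deleteLeaves_add_six_le (hG : G.IsTree)
    (h3 : 3 ≤ #{v | G.deleteLeaves.degree v = 1}) :
    G.deleteLeaves.triameter + 6 ≤ G.triameter := by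
  obtain ⟨v, -⟩ := card_pos.1 (by omega : 0 < #{v | G.deleteLeaves.degree v = 1})
  have : Nonempty {v // G.degree v ≠ 1} := ⟨v⟩
  obtain ⟨a, b, c, ha, hb, hc, hab, hac, hbc, habc⟩ :=
    hG.deleteLeaves.exists_degree_eq_one_dist_add_dist_add_dist_eq_triameter h3
  obtain ⟨la, hala, hla⟩ := exists_adj_degree_eq_one_of_degree_deleteLeaves_eq_one ha
  obtain ⟨lb, hblb, hlb⟩ := exists_adj_degree_eq_one_of_degree_deleteLeaves_eq_one hb
  obtain ⟨lc, hclc, hlc⟩ := exists_adj_degree_eq_one_of_degree_deleteLeaves_eq_one hc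
  have hG' := hG.connected
  calc G.deleteLeaves.triameter + 6 = G.dist la lb + G.dist la lc + G.dist lb lc := by
        rw [hG'.dist_eq_dist_deleteLeaves_add_two hab hala hla hblb hlb,
          hG'.dist_eq_dist_deleteLeaves_add_two hac hala hla hclc hlc,
          hG'.dist_eq_dist_deleteLeaves_add_two hbc hblb hlb hclc hlc, ← habc]
        ring
    _ ≤ G.triameter := G.dist_add_dist_add_dist_le_triameter la lb lc

end DeleteLeaves

end SimpleGraph

theorem triameter_eq_triameter_deleteLeaves_add_six_general {V : Type*} [Fintype V]
    (T : SimpleGraph V) [DecidableRel T.Adj] (hT : T.IsTree)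
    (h3 : 3 ≤ (Finset.univ.filter fun v : {w : V // T.degree w ≠ 1} =>
        (T.comap (Subtype.val : {w : V // T.degree w ≠ 1} → V)).degree v = 1).card) :
    T.triameter =
      (T.comap (Subtype.val : {w : V // T.degree w ≠ 1} → V)).triameter + 6 := by
  have hV : 2 < Fintype.card V := calc
    2 < #{v | T.deleteLeaves.degree v = 1} := h3
    _ ≤ Fintype.card {v // T.degree v ≠ 1} := (card_filter_le _ _).trans_eq card_univ
    _ ≤ Fintype.card V := Fintype.card_subtype_le _
  exact le_antisymm (hT.connected.triameter_le_triameter_deleteLeaves_add_six hV)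
    (hT.triameter_deleteLeaves_add_six_le h3)

/-- If `T` is a tree with at least `5` vertices and the tree `T'` obtained from `T`
by deleting all of its leaves has at least `3` leaves, then `tr(T) = tr(T') + 6`. -/
theorem triameter_eq_triameter_deleteLeaves_add_six {V : Type*} [Fintype V]
    (T : SimpleGraph V) [DecidableRel T.Adj] (hT : T.IsTree)
    (hn : 5 ≤ Fintype.card V)
    (h3 : 3 ≤ (Finset.univ.filter fun v : {w : V // T.degree w ≠ 1} =>
        (T.comap (Subtype.val : {w : V // T.degree w ≠ 1} → V)).degree v = 1).card) :
    T.triameter =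
      (T.comap (Subtype.val : {w : V // T.degree w ≠ 1} → V)).triameter + 6 :=
  triameter_eq_triameter_deleteLeaves_add_six_general T hT h3
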